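/- Let m = n - 1 ≥ 1, k ∈ ℝ, λ with λ > √(-k) if k ≤ 0, and l = l_k(λ). Then ∫₀^{l_k(λ)} (c_k(t) - λ s_k(t))^m dt = h_k(l_k(λ)), where c_k, s_k are the generalized cosine and sine (c_k'' = -k c_k, c_k(0)=1, c_k'(0)=0; s_k'' = -k s_k, s_k(0)=0, s_k'(0)=1), l_k(λ) is the first zero of σ_{k,λ}(t) = c_k(t) - λ s_k(t), and h_k(r) = (∫₀^r s_k^{n-1})/s_k(r)^{n-1}. -/

import Mathlib

/-!
If `c_k(l) = λ s_k(l)`, the addition formula `s_k(l - t) = s_k(l) c_k(t) - c_k(l) s_k(t)`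
gives `c_k(t) - λ s_k(t) = s_k(l - t) / s_k(l)`, where `s_k(l) ≠ 0` because
`c_k² + k s_k² = 1`. The substitution `t ↦ l - t` then turns `∫₀^l (c_k - λ s_k)^m` into
`(∫₀^l s_k^m) / s_k(l)^m`. It remains to check from the explicit formulas that `l_k(λ)` is a
zero of `c_k - λ s_k`.
-/

/-- Generalized cosine `c_k` (`c_k'' = -k c_k`, `c_k(0)=1`, `c_k'(0)=0`). -/
noncomputable def ck (k t : ℝ) : ℝ :=
  if k = 0 then 1
  else if 0 < k then Real.cos (Real.sqrt k * t)
  else Real.cosh (Real.sqrt (-k) * t)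

/-- Generalized sine `s_k` (`s_k'' = -k s_k`, `s_k(0)=0`, `s_k'(0)=1`). -/
noncomputable def sk (k t : ℝ) : ℝ :=
  if k = 0 then t
  else if 0 < k then Real.sin (Real.sqrt k * t) / Real.sqrt k
  else Real.sinh (Real.sqrt (-k) * t) / Real.sqrt (-k)

/-- `l_k(λ)`, the first positive zero of `σ_{k,λ}(t) = c_k(t) - λ s_k(t)`. -/
noncomputable def lk (k lam : ℝ) : ℝ :=
  if k = 0 then 1 / lam
  else if 0 < k then (Real.pi / 2 - Real.arctan (lam / Real.sqrt k)) / Real.sqrt k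
  else (Real.log ((lam / Real.sqrt (-k) + 1) / (lam / Real.sqrt (-k) - 1)) / 2) / Real.sqrt (-k)

/-- The space-form volume-to-area ratio `h_k(r) = (∫₀^r s_k^{n-1})/s_k(r)^{n-1}`. -/
noncomputable def hk (k : ℝ) (n : ℕ) (t : ℝ) : ℝ :=
  (∫ r in (0:ℝ)..t, sk k r ^ (n - 1)) / sk k t ^ (n - 1)

open Real

theorem sk_sub (k l t : ℝ) : sk k (l - t) = sk k l * ck k t - ck k l * sk k t := by
  unfold sk ck
  split_ifs with h0 hpos
  · ring
  · rw [mul_sub, sin_sub]; ring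
  · rw [mul_sub, sinh_sub]; ring

theorem ck_sq_add_mul_sk_sq (k t : ℝ) : ck k t ^ 2 + k * sk k t ^ 2 = 1 := by
  unfold sk ck
  split_ifs with h0 hpos
  · simp [h0]
  · rw [div_pow, sq_sqrt hpos.le, mul_div_cancel₀ _ hpos.ne', cos_sq_add_sin_sq]
  · have hneg : 0 < -k := by grind
    rw [div_pow, sq_sqrt hneg.le, mul_div_assoc', div_neg, mul_div_cancel_left₀ _ h0]
    linear_combination cosh_sq_sub_sinh_sq (√(-k) * t)

theorem sk_ne_zero_of_ck_eq_mul_sk {k lam l : ℝ} (h : ck k l = lam * sk k l) : sk k l ≠ 0 :=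
  fun h0 => by simpa [h, h0] using ck_sq_add_mul_sk_sq k l

theorem ck_sub_mul_sk_eq_sk_sub_div {k lam l : ℝ} (h : ck k l = lam * sk k l) (t : ℝ) :
    ck k t - lam * sk k t = sk k (l - t) / sk k l := by
  rw [sk_sub, h, eq_div_iff (sk_ne_zero_of_ck_eq_mul_sk h)]
  ring

theorem integral_ck_sub_mul_sk_pow {k lam l : ℝ} (h : ck k l = lam * sk k l) (m : ℕ) :
    ∫ t in (0:ℝ)..l, (ck k t - lam * sk k t) ^ m =
      (∫ t in (0:ℝ)..l, sk k t ^ m) / sk k l ^ m := by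
  simp_rw [ck_sub_mul_sk_eq_sk_sub_div h, div_pow]
  rw [intervalIntegral.integral_div,
    intervalIntegral.integral_comp_sub_left (fun t => sk k t ^ m) l, sub_self, sub_zero]

theorem sqrt_mul_lk_of_pos {k : ℝ} (hk : 0 < k) (lam : ℝ) :
    √k * lk k lam = π / 2 - arctan (lam / √k) := by
  rw [lk, if_neg hk.ne', if_pos hk]
  field_simp [(sqrt_pos.2 hk).ne']

theorem sqrt_neg_div_mem_Ioo {k lam : ℝ} (hlam : √(-k) < lam) :
    √(-k) / lam ∈ Set.Ioo (-1) 1 := by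
  have hlam0 : 0 < lam := (sqrt_nonneg _).trans_lt hlam
  exact ⟨by linarith [div_nonneg (sqrt_nonneg (-k)) hlam0.le], (div_lt_one hlam0).2 hlam⟩

theorem sqrt_neg_mul_lk_of_neg {k lam : ℝ} (hk : k < 0) (hlam : √(-k) < lam) :
    √(-k) * lk k lam = artanh (√(-k) / lam) := by
  have ha : 0 < √(-k) := sqrt_pos.2 (neg_pos.2 hk)
  have hlam0 : 0 < lam := ha.trans hlam
  have hflip :
      (lam / √(-k) + 1) / (lam / √(-k) - 1) = (1 + √(-k) / lam) / (1 - √(-k) / lam) := by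
    field_simp
  rw [lk, if_neg hk.ne, if_neg (not_lt.2 hk.le), hflip,
    artanh_eq_half_log (Set.Ioo_subset_Icc_self (sqrt_neg_div_mem_Ioo hlam))]
  field_simp

theorem ck_lk_eq_mul_sk_lk {k lam : ℝ} (hlam0 : k = 0 → 0 < lam)
    (hlamneg : k < 0 → √(-k) < lam) : ck k (lk k lam) = lam * sk k (lk k lam) := by
  rcases lt_trichotomy k 0 with hk | rfl | hk
  · have ha : 0 < √(-k) := sqrt_pos.2 (neg_pos.2 hk)
    have hlam := hlamneg hk
    have hlam0 : 0 < lam := ha.trans hlam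
    have htanh := tanh_artanh (sqrt_neg_div_mem_Ioo hlam)
    rw [← sqrt_neg_mul_lk_of_neg hk hlam, tanh_eq_sinh_div_cosh,
      div_eq_div_iff (cosh_pos _).ne' hlam0.ne'] at htanh
    simp only [ck, sk, if_neg hk.ne, if_neg (not_lt.2 hk.le)]
    field_simp
    linarith
  · simp only [ck, sk, lk, if_pos]
    field_simp [(hlam0 rfl).ne']
  · have ha : 0 < √k := sqrt_pos.2 hk
    have htan := tan_arctan (lam / √k)
    rw [tan_eq_sin_div_cos, div_eq_div_iff (cos_arctan_pos _).ne' ha.ne'] at htan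
    simp only [ck, sk, if_neg hk.ne', if_pos hk, sqrt_mul_lk_of_pos hk, sin_pi_div_two_sub,
      cos_pi_div_two_sub]
    field_simp
    linarith

theorem stmt_16_general (n : ℕ) (k lam : ℝ)
    (hlam0 : k = 0 → 0 < lam) (hlamneg : k < 0 → Real.sqrt (-k) < lam) :
    ∫ t in (0:ℝ)..(lk k lam), (ck k t - lam * sk k t) ^ (n - 1) =
      hk k n (lk k lam) :=
  integral_ck_sub_mul_sk_pow (ck_lk_eq_mul_sk_lk hlam0 hlamneg) (n - 1)

/-- `∫₀^{l_k(λ)} (c_k(t) - λ s_k(t))^{n-1} dt = h_k(l_k(λ))`: the volume of the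
geodesic ball of radius `l_k(λ)` in the space form equals its boundary area
times `h_k`, computed via the Jacobian `σ_{k,λ}^{n-1}` along normal geodesics
from the boundary sphere. -/
theorem stmt_16 (n : ℕ) (hn : 2 ≤ n) (k lam : ℝ)
    (hlam0 : k = 0 → 0 < lam) (hlamneg : k < 0 → Real.sqrt (-k) < lam) :
    ∫ t in (0:ℝ)..(lk k lam), (ck k t - lam * sk k t) ^ (n - 1) =
      hk k n (lk k lam) :=
  stmt_16_general n k lam hlam0 hlamneg
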